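/- Let n ≥ 2 be an integer and λ₁, …, λ_{n+1} ∈ [0, π]. Then the identity matrix I belongs to the set product C(λ₁)⋯C(λ_{n+1}) in SU(2) if and only if there exists λ ∈ [0, π] such that I belongs to the set product C(λ₁)⋯C(λ_{n−1})C(λ) and I belongs to the set product C(λ)C(λ_n)C(λ_{n+1}). -/

import Mathlib

open Matrix Complex Pointwise

/-- `SU(2)`: the subgroup of the unitary group `U(2)` (2×2 complex unitary matrices)
consisting of the matrices of determinant 1. -/
noncomputable def SU2 : Subgroup (Matrix.unitaryGroup (Fin 2) ℂ) :=
  MonoidHom.ker (Matrix.detMonoidHom.comp (Submonoid.subtype _))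

theorem mem_SU2_iff (A : Matrix.unitaryGroup (Fin 2) ℂ) :
    A ∈ SU2 ↔ Matrix.det (A : Matrix (Fin 2) (Fin 2) ℂ) = 1 := Iff.rfl

/-- The diagonal matrix `diag(e^{iλ}, e^{-iλ})` as an element of `SU(2)`. -/
noncomputable def su2diag (l : ℝ) : SU2 :=
  ⟨⟨Matrix.diagonal ![Complex.exp (l * Complex.I), Complex.exp (-(l * Complex.I))], by
    rw [Matrix.mem_unitaryGroup_iff]
    rw [Matrix.star_eq_conjTranspose, Matrix.diagonal_conjTranspose,
      Matrix.diagonal_mul_diagonal]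
    have h : (fun i => ![Complex.exp (l * Complex.I), Complex.exp (-(l * Complex.I))] i *
        star ![Complex.exp (l * Complex.I), Complex.exp (-(l * Complex.I))] i)
        = (1 : Fin 2 → ℂ) := by
      funext i
      fin_cases i <;>
        simp [Pi.star_apply, ← Complex.exp_conj, ← Complex.exp_add]
    rw [h]; exact Matrix.diagonal_one⟩, by
    rw [mem_SU2_iff]
    rw [Matrix.det_diagonal]
    simp [Fin.prod_univ_two, ← Complex.exp_add]⟩

/-- The conjugacy class `C(λ)` of `diag(e^{iλ}, e^{-iλ})` in `SU(2)`. -/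
noncomputable def conjClass (l : ℝ) : Set SU2 :=
  { g | ∃ h : SU2, h * su2diag l * h⁻¹ = g }

/-- The pointwise set product `C(λ₁)⋯C(λ_m)` of the conjugacy classes
`C(λ₁), …, C(λ_m)` in `SU(2)`. -/
noncomputable def classProd {m : ℕ} (l : Fin m → ℝ) : Set SU2 :=
  (List.ofFn fun i => conjClass (l i)).prod

/-!
Every `g ∈ SU(2)` is conjugate to `diag(e^{iμ}, e^{-iμ})` with `cos μ = Re g₀₀`, `μ ∈ [0, π]`:
`e^{iμ}` is a root of the characteristic polynomial, and a unit eigenvector `(p, q)` for it gives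
the conjugating matrix `[[p, -q̄], [q, p̄]] ∈ SU(2)`. Moreover the Weyl element `[[0, -1], [1, 0]]`
conjugates `diag(e^{iμ}, e^{-iμ})` to its inverse, so every element of `SU(2)` is conjugate to its
inverse.

In any group with this property, if `T` is a union of conjugacy classes, then `1 ∈ S * T` iff
some conjugacy class `C` has `1 ∈ S * C` and `1 ∈ C * T`: for `x ∈ S` with `x⁻¹ ∈ T`, take `C` the
class of `x⁻¹`; conversely `x⁻¹ ∈ C` and `c ∈ C` with `c⁻¹ ∈ T` make `x⁻¹` conjugate to `c⁻¹`.
The theorem is the case `S = C(λ₁)⋯C(λ_{n-1})`, `T = C(λ_n)C(λ_{n+1})`.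
-/

section Conjugacy

variable {G : Type*} [Group G]

theorem IsConj.inv {a b : G} (h : IsConj a b) : IsConj a⁻¹ b⁻¹ := by
  obtain ⟨c, rfl⟩ := isConj_iff.mp h
  exact isConj_iff.mpr ⟨c, by group⟩

def IsConjInvariant (T : Set G) : Prop :=
  ∀ ⦃a b : G⦄, IsConj a b → a ∈ T → b ∈ T

theorem isConjInvariant_conjugatesOf (g : G) : IsConjInvariant (conjugatesOf g) :=
  fun _ _ hab hga => IsConj.trans hga hab

theorem IsConjInvariant.mul {A B : Set G} (hA : IsConjInvariant A) (hB : IsConjInvariant B) :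
    IsConjInvariant (A * B) := by
  rintro _ _ hconj ⟨a, ha, b, hb, rfl⟩
  obtain ⟨c, rfl⟩ := isConj_iff.mp hconj
  rw [← conj_mul]
  exact Set.mul_mem_mul (hA (isConj_iff.mpr ⟨c, rfl⟩) ha) (hB (isConj_iff.mpr ⟨c, rfl⟩) hb)

theorem Set.one_mem_mul_iff {S T : Set G} : 1 ∈ S * T ↔ ∃ a ∈ S, a⁻¹ ∈ T := by
  constructor
  · rintro ⟨a, ha, b, hb, hab⟩
    exact ⟨a, ha, eq_inv_of_mul_eq_one_right hab ▸ hb⟩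
  · rintro ⟨a, ha, hainv⟩
    exact ⟨a, ha, a⁻¹, hainv, mul_inv_cancel a⟩

theorem one_mem_mul_iff_exists_conjugatesOf (hG : ∀ g : G, IsConj g g⁻¹) {S T : Set G}
    (hT : IsConjInvariant T) :
    1 ∈ S * T ↔ ∃ g : G, 1 ∈ S * conjugatesOf g ∧ 1 ∈ conjugatesOf g * T := by
  simp only [Set.one_mem_mul_iff]
  constructor
  · rintro ⟨x, hx, hxT⟩
    refine ⟨x⁻¹, ⟨x, hx, mem_conjugatesOf_self⟩, x, ?_, hxT⟩
    show IsConj x⁻¹ x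
    simpa only [inv_inv] using hG x⁻¹
  · rintro ⟨g, ⟨x, hx, hgx⟩, c, hgc, hcT⟩
    have hcx : IsConj c⁻¹ x := by simpa using (hgc.symm.trans hgx).inv
    exact ⟨x, hx, hT (hcx.trans (hG x)) hcT⟩

end Conjugacy

namespace SU2

open ComplexConjugate

def toMatrix (g : SU2) : Matrix (Fin 2) (Fin 2) ℂ :=
  ((g : unitaryGroup (Fin 2) ℂ) : Matrix (Fin 2) (Fin 2) ℂ)

theorem toMatrix_injective : Function.Injective toMatrix :=
  fun _ _ h => Subtype.ext (Subtype.ext h)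

theorem toMatrix_mul (g h : SU2) : toMatrix (g * h) = toMatrix g * toMatrix h := rfl

theorem toMatrix_su2diag (l : ℝ) :
    toMatrix (su2diag l) = !![exp (l * I), 0; 0, conj (exp (l * I))] := by
  rw [← exp_conj, map_mul, conj_ofReal, conj_I, mul_neg]
  exact diagonal_vec2 _ _

theorem mul_conj_add_mul_conj_eq_one_iff {p q : ℂ} :
    p * conj p + q * conj q = 1 ↔ normSq p + normSq q = 1 := by
  rw [mul_conj, mul_conj]; exact_mod_cast Iff.rfl

theorem exists_toMatrix_eq (g : SU2) :
    ∃ a b : ℂ, normSq a + normSq b = 1 ∧ toMatrix g = !![a, b; -conj b, conj a] := by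
  set A := toMatrix g
  have hdet : A.det = 1 := g.2
  have hstar : star A = A.adjugate := by
    have hadj : A * A.adjugate = 1 := by rw [mul_adjugate, hdet, one_smul]
    have hunit : A * star A = 1 := mem_unitaryGroup_iff.mp (g : unitaryGroup (Fin 2) ℂ).2
    rw [← inv_eq_right_inv hunit, inv_eq_right_inv hadj]
  have h11 : A 1 1 = conj (A 0 0) := by
    simpa [adjugate_fin_two] using (congrFun₂ hstar 0 0).symm
  have h10 : A 1 0 = -conj (A 0 1) := by
    have := congrArg conj (congrFun₂ hstar 0 1)
    simpa [adjugate_fin_two] using this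
  refine ⟨A 0 0, A 0 1, ?_, (eta_fin_two A).trans (by rw [h10, h11])⟩
  rw [det_fin_two, h10, h11] at hdet
  exact mul_conj_add_mul_conj_eq_one_iff.mp (by linear_combination hdet)

def ofPair (p q : ℂ) (h : normSq p + normSq q = 1) : SU2 :=
  ⟨⟨!![p, -conj q; q, conj p], by
    rw [mem_unitaryGroup_iff, star_eq_conjTranspose]
    ext i j
    fin_cases i <;> fin_cases j <;> simp [mul_apply, Fin.sum_univ_two]
    · linear_combination mul_conj_add_mul_conj_eq_one_iff.mpr h
    · ring
    · ring
    · linear_combination mul_conj_add_mul_conj_eq_one_iff.mpr h⟩, by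
    change det !![p, -conj q; q, conj p] = 1
    rw [det_fin_two_of]
    linear_combination mul_conj_add_mul_conj_eq_one_iff.mpr h⟩

theorem toMatrix_ofPair (p q : ℂ) (h : normSq p + normSq q = 1) :
    toMatrix (ofPair p q h) = !![p, -conj q; q, conj p] := rfl

theorem exists_unit_eigenvector {a b e : ℂ} (hab : normSq a + normSq b = 1)
    (he : e ^ 2 - (a + conj a) * e + 1 = 0) :
    ∃ p q : ℂ, normSq p + normSq q = 1 ∧
      a * p + b * q = e * p ∧ -conj b * p + conj a * q = e * q := by
  obtain ⟨v, hv0, hv⟩ := exists_mulVec_eq_zero_iff.mpr (show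
      det !![a - e, b; -conj b, conj a - e] = 0 by
    rw [det_fin_two_of]; linear_combination he + mul_conj_add_mul_conj_eq_one_iff.mpr hab)
  have hv₀ := congrFun hv 0
  have hv₁ := congrFun hv 1
  simp only [mulVec, dotProduct, Fin.sum_univ_two, of_apply, cons_val', cons_val_zero,
    cons_val_one, empty_val', cons_val_fin_one, Pi.zero_apply] at hv₀ hv₁
  set N := normSq (v 0) + normSq (v 1)
  have hN : 0 < N := by
    have h₀ := normSq_nonneg (v 0)
    have h₁ := normSq_nonneg (v 1)
    by_contra! hN0
    have hv0' : v 0 = 0 := normSq_eq_zero.mp (by linarith)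
    have hv1' : v 1 = 0 := normSq_eq_zero.mp (by linarith)
    exact hv0 (by ext i; fin_cases i <;> assumption)
  set s : ℂ := (((√N)⁻¹ : ℝ) : ℂ)
  refine ⟨s * v 0, s * v 1, ?_, by linear_combination s * hv₀, by linear_combination s * hv₁⟩
  rw [normSq_mul, normSq_mul, ← mul_add, normSq_ofReal, ← mul_inv, Real.mul_self_sqrt hN.le,
    inv_mul_cancel₀ hN.ne']

theorem ofPair_mul_su2diag {g : SU2} {a b : ℂ} (hg : toMatrix g = !![a, b; -conj b, conj a])
    {l : ℝ} {p q : ℂ} (hpq : normSq p + normSq q = 1)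
    (h₀ : a * p + b * q = exp (l * I) * p) (h₁ : -conj b * p + conj a * q = exp (l * I) * q) :
    ofPair p q hpq * su2diag l = g * ofPair p q hpq := by
  apply toMatrix_injective
  rw [toMatrix_mul, toMatrix_mul, toMatrix_su2diag, toMatrix_ofPair, hg]
  -- the second column of `ofPair p q` is an eigenvector for `conj (exp (l * I))`
  have h₀' := congrArg conj h₀
  have h₁' := congrArg conj h₁
  simp only [map_add, map_mul, map_neg, conj_conj] at h₀' h₁'
  ext i j
  fin_cases i <;> fin_cases j <;> simp [mul_apply, Fin.sum_univ_two]
  · linear_combination -h₀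
  · linear_combination h₁'
  · linear_combination -h₁
  · linear_combination -h₀'

theorem exists_mem_conjClass (g : SU2) : ∃ μ ∈ Set.Icc 0 Real.pi, g ∈ conjClass μ := by
  obtain ⟨a, b, hab, hg⟩ := exists_toMatrix_eq g
  have hre : |a.re| ≤ 1 := by
    have : ‖a‖ ^ 2 ≤ 1 := by rw [Complex.sq_norm]; linarith [normSq_nonneg b]
    exact (abs_re_le_norm a).trans (by nlinarith [norm_nonneg a])
  set μ := Real.arccos a.re
  have hcos : Real.cos μ = a.re := Real.cos_arccos (abs_le.mp hre).1 (abs_le.mp hre).2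
  have he : exp (μ * I) ^ 2 - (a + conj a) * exp (μ * I) + 1 = 0 := by
    have hinv : exp (-μ * I) * exp (μ * I) = 1 := by rw [← exp_add]; simp
    rw [add_conj, ← hcos, ofReal_mul, ofReal_cos, ofReal_ofNat, two_cos]
    linear_combination -hinv
  obtain ⟨p, q, hpq, h₀, h₁⟩ := exists_unit_eigenvector hab he
  exact ⟨μ, ⟨Real.arccos_nonneg _, Real.arccos_le_pi _⟩, ofPair p q hpq,
    by rw [ofPair_mul_su2diag hg hpq h₀ h₁, mul_inv_cancel_right]⟩

def weyl : SU2 := ofPair 0 1 (by simp)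

theorem su2diag_mul_weyl_mul_su2diag (l : ℝ) : su2diag l * weyl * su2diag l = weyl := by
  apply toMatrix_injective
  rw [toMatrix_mul, toMatrix_mul, toMatrix_su2diag, weyl, toMatrix_ofPair]
  ext i j
  fin_cases i <;> fin_cases j <;> simp [mul_apply, Fin.sum_univ_two, ← exp_conj, ← exp_add]

theorem isConj_su2diag_inv (l : ℝ) : IsConj (su2diag l) (su2diag l)⁻¹ := by
  refine isConj_iff.mpr ⟨weyl⁻¹, eq_inv_of_mul_eq_one_left ?_⟩
  calc weyl⁻¹ * su2diag l * weyl⁻¹⁻¹ * su2diag l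
      = weyl⁻¹ * (su2diag l * weyl * su2diag l) := by group
    _ = 1 := by rw [su2diag_mul_weyl_mul_su2diag, inv_mul_cancel]

theorem conjClass_eq_conjugatesOf (l : ℝ) : conjClass l = conjugatesOf (su2diag l) :=
  Set.ext fun _ => isConj_iff.symm

theorem isConj_inv_self (g : SU2) : IsConj g g⁻¹ := by
  obtain ⟨μ, -, hg⟩ := exists_mem_conjClass g
  have hd : IsConj (su2diag μ) g := isConj_iff.mpr hg
  exact (hd.symm.trans (isConj_su2diag_inv μ)).trans hd.inv

theorem exists_conjClass_eq_conjugatesOf (g : SU2) :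
    ∃ μ ∈ Set.Icc 0 Real.pi, conjClass μ = conjugatesOf g := by
  obtain ⟨μ, hμ, hg⟩ := exists_mem_conjClass g
  exact ⟨μ, hμ, (conjClass_eq_conjugatesOf μ).trans (isConj_iff.mpr hg).conjugatesOf_eq⟩

theorem isConjInvariant_conjClass (l : ℝ) : IsConjInvariant (conjClass l) :=
  conjClass_eq_conjugatesOf l ▸ isConjInvariant_conjugatesOf _

theorem classProd_succ_succ {m : ℕ} (l : Fin (m + 2) → ℝ) :
    classProd l = classProd (fun i : Fin m => l (Fin.castLE (by omega) i)) *
      conjClass (l ⟨m, by omega⟩) * conjClass (l ⟨m + 1, by omega⟩) := by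
  rw [classProd, List.ofFn_succ', List.prod_concat, List.ofFn_succ', List.prod_concat]
  rfl

end SU2

/-- For `n ≥ 2` and `λ₁, …, λ_{n+1} ∈ [0, π]`, the identity belongs to
`C(λ₁)⋯C(λ_{n+1})` iff there exists `λ ∈ [0, π]` such that the identity belongs to
`C(λ₁)⋯C(λ_{n−1})C(λ)` and to `C(λ)C(λ_n)C(λ_{n+1})`. -/
theorem one_mem_classProd_iff_glue (n : ℕ) (hn : 2 ≤ n) (l : Fin (n + 1) → ℝ) :
    (1 : SU2) ∈ classProd l ↔
      ∃ μ ∈ Set.Icc (0 : ℝ) Real.pi,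
        (1 : SU2) ∈ classProd (fun i : Fin (n - 1) => l (Fin.castLE (by omega) i))
            * conjClass μ ∧
        (1 : SU2) ∈ conjClass μ * conjClass (l ⟨n - 1, by omega⟩)
            * conjClass (l ⟨n, by omega⟩) := by
  obtain ⟨m, rfl⟩ : ∃ m, n = m + 2 := ⟨n - 2, by omega⟩
  rw [SU2.classProd_succ_succ (m := m + 1) l, mul_assoc,
    one_mem_mul_iff_exists_conjugatesOf SU2.isConj_inv_self
      ((SU2.isConjInvariant_conjClass _).mul (SU2.isConjInvariant_conjClass _))]
  constructor
  · rintro ⟨g, hS, hT⟩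
    obtain ⟨μ, hμ, hμg⟩ := SU2.exists_conjClass_eq_conjugatesOf g
    exact ⟨μ, hμ, hμg ▸ hS, by rw [mul_assoc, hμg]; exact hT⟩
  · rintro ⟨μ, -, hS, hT⟩
    rw [SU2.conjClass_eq_conjugatesOf, mul_assoc] at hT
    rw [SU2.conjClass_eq_conjugatesOf] at hS
    exact ⟨su2diag μ, hS, hT⟩
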